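/- Let E be a finite-dimensional real inner product space, μ ≥ 0, T > 0, and f : E → ℝ continuously differentiable and μ-strongly convex. Suppose X : [0,T] → E is continuous and twice continuously differentiable on [0,T), satisfying for all t ∈ (0,T): Ẍ(t) + ((√μ/2)·tanh((√μ/2)·(T−t)) + (3/(T−t))·cothc((√μ/2)·(T−t)))·Ẋ(t) + ∇f(X(t)) = 0. Then the energy function 𝓔(t) = (4/(T−t)²)·cschc²((√μ/2)·(T−t))·(f(X(t)) − f(X(T))) − (8/(T−t)⁴)·cschc⁴((√μ/2)·(T−t))·‖X(t) − X(T)‖² + (8/(T−t)⁴)·cschc²((√μ/2)·(T−t))·cothc²((√μ/2)·(T−t))·‖X(t) + ((T−t)/2)·tanhc((√μ/2)·(T−t))·Ẋ(t) − X(T)‖² is monotonically nonincreasing on [0,T). -/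

import Mathlib

/-!
Put `s = √μ/2`, `P(t) = sinh(s(T-t))/s` and `Q(t) = cosh(s(T-t))`, so that `P' = -Q`, `Q' = -s²P`
and `Q² = 1 + s²P²`. In these terms the energy is
`4/P² (f(X) - f(X_T)) - 8/P⁴ ‖X - X_T‖² + 8Q²/P⁴ ‖V‖²` with `V = X + (P/2Q) Ẋ - X_T`,
and the damping of the ODE is exactly what makes `V' = -Ẋ - (P/2Q) ∇f(X)`. Differentiating, the
energy changes at rate `8Q/P³ (f(X) - f(X_T) - ⟪X - X_T, ∇f(X)⟫ + (μ/2)‖X - X_T‖²) - μ/(PQ) ‖Ẋ‖²`,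
which is nonpositive by strong convexity between `X(t)` and `X(T)`.
-/

open scoped RealInnerProductSpace

noncomputable def sinhc (x : ℝ) : ℝ := if x = 0 then 1 else Real.sinh x / x
noncomputable def cschc (x : ℝ) : ℝ := 1 / sinhc x
noncomputable def tanhc (x : ℝ) : ℝ := sinhc x / Real.cosh x
noncomputable def cothc (x : ℝ) : ℝ := 1 / tanhc x

open Real Set Topology

theorem sinhc_pos (x : ℝ) : 0 < sinhc x := by
  unfold sinhc
  split_ifs with hx
  · exact one_pos
  · rcases lt_or_gt_of_ne hx with hneg | hpos
    · exact div_pos_of_neg_of_neg (sinh_neg_iff.mpr hneg) hneg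
    · exact div_pos (sinh_pos_iff.mpr hpos) hpos

theorem mul_mul_sinhc_mul (s τ : ℝ) : s * (τ * sinhc (s * τ)) = sinh (s * τ) := by
  unfold sinhc
  split_ifs with h
  · rcases mul_eq_zero.mp h with rfl | rfl <;> simp
  · rw [← mul_assoc]; exact mul_div_cancel₀ _ h

theorem hasDerivAt_mul_sinhc_mul (s τ : ℝ) :
    HasDerivAt (fun τ => τ * sinhc (s * τ)) (cosh (s * τ)) τ := by
  rcases eq_or_ne s 0 with rfl | hs
  · simpa [sinhc] using hasDerivAt_id' τ
  · have hfun : (fun τ => τ * sinhc (s * τ)) = fun τ => sinh (s * τ) / s := by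
      ext τ
      rw [← mul_mul_sinhc_mul s τ]
      field_simp
    rw [hfun]
    refine (((hasDerivAt_id' τ).const_mul s).sinh.div_const s).congr_deriv ?_
    field_simp

theorem hasDerivAt_cosh_mul (s τ : ℝ) :
    HasDerivAt (fun τ => cosh (s * τ)) (s ^ 2 * (τ * sinhc (s * τ))) τ := by
  refine ((hasDerivAt_id' τ).const_mul s).cosh.congr_deriv ?_
  rw [pow_two, mul_assoc, mul_mul_sinhc_mul]
  ring

theorem cosh_sq_eq_one_add_sq_mul_sinhc (s τ : ℝ) :
    cosh (s * τ) ^ 2 = 1 + s ^ 2 * (τ * sinhc (s * τ)) ^ 2 := by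
  rw [cosh_sq, ← mul_mul_sinhc_mul]
  ring

theorem mul_tanh_add_div_mul_cothc {s τ : ℝ} (hτ : τ ≠ 0) :
    s * tanh (s * τ) + 3 / τ * cothc (s * τ)
      = s ^ 2 * (τ * sinhc (s * τ)) / cosh (s * τ)
        + 3 * cosh (s * τ) / (τ * sinhc (s * τ)) := by
  have hS := (sinhc_pos (s * τ)).ne'
  have hC := (cosh_pos (s * τ)).ne'
  rw [tanh_eq_sinh_div_cosh, ← mul_mul_sinhc_mul, cothc, tanhc]
  field_simp

section Energy

variable {E : Type*} [NormedAddCommGroup E] [InnerProductSpace ℝ E]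

/-- The energy with `p = sinh(s(T-t))/s` and `q = cosh(s(T-t))` in place of the modified hyperbolic
functions of `s(T-t)`. -/
noncomputable def nagEnergy (p q φ : ℝ) (x v xT : E) : ℝ :=
  4 / p ^ 2 * φ - 8 / p ^ 4 * ‖x - xT‖ ^ 2
    + 8 * q ^ 2 / p ^ 4 * ‖x + (p / (2 * q)) • v - xT‖ ^ 2

theorem nagEnergy_mul_sinhc_cosh {s τ : ℝ} (hτ : τ ≠ 0) (φ : ℝ) (x v xT : E) :
    nagEnergy (τ * sinhc (s * τ)) (cosh (s * τ)) φ x v xT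
      = 4 / τ ^ 2 * cschc (s * τ) ^ 2 * φ - 8 / τ ^ 4 * cschc (s * τ) ^ 4 * ‖x - xT‖ ^ 2
        + 8 / τ ^ 4 * cschc (s * τ) ^ 2 * cothc (s * τ) ^ 2
          * ‖x + (τ / 2 * tanhc (s * τ)) • v - xT‖ ^ 2 := by
  have hS := (sinhc_pos (s * τ)).ne'
  have hC := (cosh_pos (s * τ)).ne'
  have htanhc : τ / 2 * tanhc (s * τ) = τ * sinhc (s * τ) / (2 * cosh (s * τ)) := by
    rw [tanhc]; ring
  rw [nagEnergy, htanhc, cothc, cschc, tanhc]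
  field_simp

theorem hasDerivAt_nagEnergy {s t : ℝ} {P Q φ : ℝ → ℝ} {X X' : ℝ → E} {g xT : E}
    (hP : HasDerivAt P (-Q t) t) (hQ : HasDerivAt Q (-(s ^ 2 * P t)) t)
    (hPQ : Q t ^ 2 = 1 + s ^ 2 * P t ^ 2) (hP0 : P t ≠ 0) (hQ0 : Q t ≠ 0)
    (hX : HasDerivAt X (X' t) t)
    (hX' : HasDerivAt X' (-((s ^ 2 * P t / Q t + 3 * Q t / P t) • X' t) - g) t)
    (hφ : HasDerivAt φ ⟪g, X' t⟫ t) :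
    HasDerivAt (fun u => nagEnergy (P u) (Q u) (φ u) (X u) (X' u) xT)
      (8 * Q t / P t ^ 3 * (φ t - ⟪X t - xT, g⟫ + 2 * s ^ 2 * ‖X t - xT‖ ^ 2)
        - 4 * s ^ 2 / (P t * Q t) * ‖X' t‖ ^ 2) t := by
  have hw : HasDerivAt (fun u => P u / (2 * Q u))
      ((-Q t * (2 * Q t) - P t * (2 * -(s ^ 2 * P t))) / (2 * Q t) ^ 2) t :=
    hP.div (hQ.const_mul 2) (by simpa using hQ0)
  have hV : HasDerivAt (fun u => X u + (P u / (2 * Q u)) • X' u - xT)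
      (-X' t - (P t / (2 * Q t)) • g) t := by
    refine ((hX.add (hw.smul hX')).sub_const xT).congr_deriv ?_
    have hcoeff : 1 + (-Q t * (2 * Q t) - P t * (2 * -(s ^ 2 * P t))) / (2 * Q t) ^ 2
        - P t / (2 * Q t) * (s ^ 2 * P t / Q t + 3 * Q t / P t) = -1 := by
      field_simp; ring
    linear_combination (norm := module) hcoeff • X' t
  have hA : HasDerivAt (fun u => 4 / P u ^ 2) _ t :=
    (hasDerivAt_const t (4 : ℝ)).div (hP.pow 2) (pow_ne_zero 2 hP0)
  have hB : HasDerivAt (fun u => 8 / P u ^ 4) _ t :=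
    (hasDerivAt_const t (8 : ℝ)).div (hP.pow 4) (pow_ne_zero 4 hP0)
  have hC : HasDerivAt (fun u => 8 * Q u ^ 2 / P u ^ 4) _ t :=
    ((hQ.pow 2).const_mul 8).div (hP.pow 4) (pow_ne_zero 4 hP0)
  refine (((hA.mul hφ).sub (hB.mul (hX.sub_const xT).norm_sq)).add
    (hC.mul hV.norm_sq)).congr_deriv ?_
  simp only [← real_inner_self_eq_norm_sq, inner_add_left, inner_add_right, inner_sub_left,
    inner_sub_right, inner_neg_right, real_inner_smul_left, real_inner_smul_right,
    real_inner_comm (X' t) (X t), real_inner_comm xT (X t), real_inner_comm xT (X' t),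
    real_inner_comm g (X t), real_inner_comm g (X' t), real_inner_comm g xT]
  have hs2 : s ^ 2 = (Q t ^ 2 - 1) / P t ^ 2 := by
    field_simp
    linarith
  simp only [Pi.pow_apply, hs2]
  field_simp
  ring

theorem ContinuousOn.nagEnergy {S : Set ℝ} {P Q φ : ℝ → ℝ} {X V : ℝ → E} (xT : E)
    (hP : ContinuousOn P S) (hQ : ContinuousOn Q S) (hφ : ContinuousOn φ S)
    (hX : ContinuousOn X S) (hV : ContinuousOn V S)
    (hP0 : ∀ t ∈ S, P t ≠ 0) (hQ0 : ∀ t ∈ S, Q t ≠ 0) :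
    ContinuousOn (fun t => nagEnergy (P t) (Q t) (φ t) (X t) (V t) xT) S := by
  unfold _root_.nagEnergy
  fun_prop (disch := simp_all)

theorem nagEnergy_rate_nonpos {s p q φ : ℝ} {x v g xT : E} (hp : 0 < p) (hq : 0 < q)
    (hconv : φ + ⟪g, xT - x⟫ + 2 * s ^ 2 * ‖xT - x‖ ^ 2 ≤ 0) :
    8 * q / p ^ 3 * (φ - ⟪x - xT, g⟫ + 2 * s ^ 2 * ‖x - xT‖ ^ 2)
      - 4 * s ^ 2 / (p * q) * ‖v‖ ^ 2 ≤ 0 := by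
  rw [← neg_sub x, inner_neg_right, norm_neg, real_inner_comm] at hconv
  have hv : 0 ≤ 4 * s ^ 2 / (p * q) * ‖v‖ ^ 2 := by positivity
  have hx := mul_nonpos_of_nonneg_of_nonpos (by positivity : 0 ≤ 8 * q / p ^ 3)
    (by linarith : φ - ⟪x - xT, g⟫ + 2 * s ^ 2 * ‖x - xT‖ ^ 2 ≤ 0)
  linarith

theorem antitoneOn_nagEnergy_of_ode [CompleteSpace E] {s a b : ℝ} {P Q : ℝ → ℝ} {f : E → ℝ}
    {X : ℝ → E} {xT : E}
    (hP : ∀ t ∈ Ico a b, HasDerivAt P (-Q t) t)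
    (hQ : ∀ t ∈ Ico a b, HasDerivAt Q (-(s ^ 2 * P t)) t)
    (hPQ : ∀ t ∈ Ico a b, Q t ^ 2 = 1 + s ^ 2 * P t ^ 2)
    (hP0 : ∀ t ∈ Ico a b, 0 < P t) (hQ0 : ∀ t ∈ Ico a b, 0 < Q t)
    (hf : ContDiff ℝ 1 f)
    (hsc : ∀ x, f x + ⟪gradient f x, xT - x⟫ + 2 * s ^ 2 * ‖xT - x‖ ^ 2 ≤ f xT)
    (hX : ContDiffOn ℝ 2 X (Ico a b))
    (hode : ∀ t ∈ Ioo a b, derivWithin (derivWithin X (Ico a b)) (Ico a b) t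
        + (s ^ 2 * P t / Q t + 3 * Q t / P t) • derivWithin X (Ico a b) t
        + gradient f (X t) = 0) :
    AntitoneOn (fun t => nagEnergy (P t) (Q t) (f (X t) - f xT) (X t)
      (derivWithin X (Ico a b) t) xT) (Ico a b) := by
  set X' := derivWithin X (Ico a b)
  have hX' : ContDiffOn ℝ 1 X' (Ico a b) := hX.derivWithin (uniqueDiffOn_Ico a b) (by norm_num)
  refine antitoneOn_of_hasDerivWithinAt_nonpos (convex_Ico a b) ?_ (fun t ht => ?_)
    (fun t ht => ?_) (f' := fun t => 8 * Q t / P t ^ 3 * (f (X t) - f xT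
      - ⟪X t - xT, gradient f (X t)⟫ + 2 * s ^ 2 * ‖X t - xT‖ ^ 2)
      - 4 * s ^ 2 / (P t * Q t) * ‖X' t‖ ^ 2)
  · exact ContinuousOn.nagEnergy xT
      (fun t ht => (hP t ht).continuousAt.continuousWithinAt)
      (fun t ht => (hQ t ht).continuousAt.continuousWithinAt)
      ((hf.continuous.comp_continuousOn hX.continuousOn).sub continuousOn_const)
      hX.continuousOn hX'.continuousOn (fun t ht => (hP0 t ht).ne') (fun t ht => (hQ0 t ht).ne')
  · rw [interior_Ico] at ht
    have hIco : Ico a b ∈ 𝓝 t := Ico_mem_nhds_iff.mpr ht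
    have htIco := mem_Ico_of_Ioo ht
    have hXt : HasDerivAt X (X' t) t :=
      ((hX.differentiableOn two_ne_zero t htIco).hasDerivWithinAt).hasDerivAt hIco
    have hX't : HasDerivAt X'
        (-((s ^ 2 * P t / Q t + 3 * Q t / P t) • X' t) - gradient f (X t)) t := by
      have hacc : derivWithin X' (Ico a b) t
          = -((s ^ 2 * P t / Q t + 3 * Q t / P t) • X' t) - gradient f (X t) := by
        linear_combination (norm := module) hode t ht
      rw [← hacc]
      exact ((hX'.differentiableOn one_ne_zero t htIco).hasDerivWithinAt).hasDerivAt hIco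
    have hφt : HasDerivAt (fun u => f (X u) - f xT) ⟪gradient f (X t), X' t⟫ t := by
      have hfX := (hf.differentiable one_ne_zero (X t)).hasGradientAt.hasFDerivAt
      simpa using (hfX.comp_hasDerivAt t hXt).sub_const (f xT)
    exact (hasDerivAt_nagEnergy (hP t htIco) (hQ t htIco) (hPQ t htIco) (hP0 t htIco).ne'
      (hQ0 t htIco).ne' hXt hX't hφt).hasDerivWithinAt
  · rw [interior_Ico] at ht
    exact nagEnergy_rate_nonpos (hP0 t (mem_Ico_of_Ioo ht)) (hQ0 t (mem_Ico_of_Ioo ht))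
      (by linarith [hsc (X t)])

end Energy

theorem unified_nag_g_ode_lyapunov_general
    {E : Type*} [NormedAddCommGroup E] [InnerProductSpace ℝ E] [FiniteDimensional ℝ E]
    (μ T : ℝ) (hμ : 0 ≤ μ)
    (f : E → ℝ) (hf : ContDiff ℝ 1 f)
    (hsc : ∀ x y : E, f x + ⟪gradient f x, y - x⟫ + μ / 2 * ‖y - x‖ ^ 2 ≤ f y)
    (X : ℝ → E)
    (hX : ContDiffOn ℝ 2 X (Set.Ico 0 T))
    (hode : ∀ t ∈ Set.Ioo (0 : ℝ) T,
      derivWithin (derivWithin X (Set.Ico 0 T)) (Set.Ico 0 T) t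
        + (Real.sqrt μ / 2 * Real.tanh (Real.sqrt μ / 2 * (T - t))
            + 3 / (T - t) * cothc (Real.sqrt μ / 2 * (T - t))) •
          derivWithin X (Set.Ico 0 T) t
        + gradient f (X t) = 0) :
    AntitoneOn (fun t =>
      4 / (T - t) ^ 2 * cschc (Real.sqrt μ / 2 * (T - t)) ^ 2 * (f (X t) - f (X T))
        - 8 / (T - t) ^ 4 * cschc (Real.sqrt μ / 2 * (T - t)) ^ 4 * ‖X t - X T‖ ^ 2
        + 8 / (T - t) ^ 4 * cschc (Real.sqrt μ / 2 * (T - t)) ^ 2 *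
            cothc (Real.sqrt μ / 2 * (T - t)) ^ 2 *
            ‖X t + ((T - t) / 2 * tanhc (Real.sqrt μ / 2 * (T - t))) •
              derivWithin X (Set.Ico 0 T) t - X T‖ ^ 2)
      (Set.Ico 0 T) := by
  set s := Real.sqrt μ / 2
  have hs : μ / 2 = 2 * s ^ 2 := by
    rw [div_pow, Real.sq_sqrt hμ]
    ring
  have hτ : ∀ t ∈ Ico 0 T, T - t ≠ 0 := fun t ht => (sub_pos.2 ht.2).ne'
  have hrev (t : ℝ) : HasDerivAt (fun t => T - t) (-1) t := (hasDerivAt_id' t).const_sub T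
  refine (antitoneOn_nagEnergy_of_ode (s := s)
    (P := fun t => (T - t) * sinhc (s * (T - t))) (Q := fun t => cosh (s * (T - t)))
    (fun t _ => ((hasDerivAt_mul_sinhc_mul s _).comp t (hrev t)).congr_deriv (mul_neg_one _))
    (fun t _ => ((hasDerivAt_cosh_mul s _).comp t (hrev t)).congr_deriv (mul_neg_one _))
    (fun t _ => cosh_sq_eq_one_add_sq_mul_sinhc s (T - t))
    (fun t ht => mul_pos (sub_pos.2 ht.2) (sinhc_pos _)) (fun t _ => cosh_pos _)
    hf (fun x => hs ▸ hsc x (X T)) hX (fun t ht => ?_)).congr (fun t ht => ?_)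
  · rw [← mul_tanh_add_div_mul_cothc (hτ t (mem_Ico_of_Ioo ht))]
    exact hode t ht
  · exact nagEnergy_mul_sinhc_cosh (hτ t ht) _ _ _ _

/-- Along the unified NAG-G ODE on `[0, T]`, the energy of Theorem 16 (built from
`f(X(t)) − f(X(T))`, `‖X(t) − X(T)‖²` and `‖X(t) + ((T−t)/2)tanhc((√μ/2)(T−t))Ẋ(t) − X(T)‖²`)
is monotonically nonincreasing on `[0, T)`. -/
theorem unified_nag_g_ode_lyapunov
    {E : Type*} [NormedAddCommGroup E] [InnerProductSpace ℝ E] [FiniteDimensional ℝ E]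
    (μ T : ℝ) (hμ : 0 ≤ μ) (hT : 0 < T)
    (f : E → ℝ) (hf : ContDiff ℝ 1 f)
    (hsc : ∀ x y : E, f x + ⟪gradient f x, y - x⟫ + μ / 2 * ‖y - x‖ ^ 2 ≤ f y)
    (X : ℝ → E)
    (hXcont : ContinuousOn X (Set.Icc 0 T))
    (hX : ContDiffOn ℝ 2 X (Set.Ico 0 T))
    (hode : ∀ t ∈ Set.Ioo (0 : ℝ) T,
      derivWithin (derivWithin X (Set.Ico 0 T)) (Set.Ico 0 T) t
        + (Real.sqrt μ / 2 * Real.tanh (Real.sqrt μ / 2 * (T - t))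
            + 3 / (T - t) * cothc (Real.sqrt μ / 2 * (T - t))) •
          derivWithin X (Set.Ico 0 T) t
        + gradient f (X t) = 0) :
    AntitoneOn (fun t =>
      4 / (T - t) ^ 2 * cschc (Real.sqrt μ / 2 * (T - t)) ^ 2 * (f (X t) - f (X T))
        - 8 / (T - t) ^ 4 * cschc (Real.sqrt μ / 2 * (T - t)) ^ 4 * ‖X t - X T‖ ^ 2
        + 8 / (T - t) ^ 4 * cschc (Real.sqrt μ / 2 * (T - t)) ^ 2 *
            cothc (Real.sqrt μ / 2 * (T - t)) ^ 2 *
            ‖X t + ((T - t) / 2 * tanhc (Real.sqrt μ / 2 * (T - t))) •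
              derivWithin X (Set.Ico 0 T) t - X T‖ ^ 2)
      (Set.Ico 0 T) :=
  unified_nag_g_ode_lyapunov_general μ T hμ f hf hsc X hX hode
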